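/- Let r ≥ 2 and let R̃ = D + T ∈ ℝ^{r×r}, where D is diagonal with diagonal entries d_{ii} ≥ δ > 0 and T is strictly upper triangular. Suppose ‖R̃ᵀR̃‖₂ ≤ 1 + ε for some ε ≥ 0 with 1 − δ² + ε ≥ 0. Then ‖TᵀD + DT + TᵀT‖₂ ≤ (r−1)(1 − δ² + ε). -/

import Mathlib

/-!
Write `B = R̃ᵀR̃ = D² + M` with `M = TᵀD + DT + TᵀT`, a symmetric matrix. Since `T` has zero
diagonal, `Mᵢᵢ = ∑ₖ Tₖᵢ² ≥ 0`, so `Bᵢᵢ ≥ δ²`. Testing `B ≤ (1 + ε) I` on `eᵢ ± eⱼ` bounds every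
off-diagonal entry `|Mᵢⱼ| = |Bᵢⱼ|` by `η = 1 - δ² + ε`. Hence `xᵀMx ≥ -η ∑_{i ≠ j} |xᵢ||xⱼ|
≥ -(r - 1) η ‖x‖²` by Cauchy–Schwarz, while `xᵀMx = xᵀBx - xᵀD²x ≤ η ‖x‖²`. For a symmetric
matrix these two-sided bounds on the quadratic form bound the spectral norm.
-/

open Matrix

/-- The spectral norm (largest singular value) of a real matrix: the operator
norm induced by the Euclidean vector norms. -/
noncomputable def specNorm {m n : ℕ} (M : Matrix (Fin m) (Fin n) ℝ) : ℝ :=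
  ‖LinearMap.toContinuousLinearMap (Matrix.toEuclideanLin M)‖

theorem ContinuousLinearMap.norm_le_of_abs_inner_self_le {E : Type*} [NormedAddCommGroup E]
    [InnerProductSpace ℝ E] (T : E →L[ℝ] E) (hT : (T : E →ₗ[ℝ] E).IsSymmetric)
    {C : ℝ} (hC : 0 ≤ C) (h : ∀ x, |inner ℝ (T x) x| ≤ C * ‖x‖ ^ 2) : ‖T‖ ≤ C := by
  rw [T.norm_eq_iSup_rayleighQuotient hT]
  refine ciSup_le fun x => ?_
  rcases eq_or_ne x 0 with rfl | hx
  · simpa using hC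
  rw [rayleighQuotient, reApplyInnerSelf_apply, RCLike.re_to_real, abs_div, abs_sq,
    div_le_iff₀ (by positivity)]
  exact h x

theorem EuclideanSpace.real_norm_sq_eq_dotProduct {n : Type*} [Fintype n]
    (x : EuclideanSpace ℝ n) : ‖x‖ ^ 2 = x.ofLp ⬝ᵥ x.ofLp := by
  rw [← real_inner_self_eq_norm_sq]
  rfl

namespace Matrix

variable {n : Type*} [Fintype n] [DecidableEq n]

theorem inner_toEuclideanLin_self (A : Matrix n n ℝ) (x : EuclideanSpace ℝ n) :
    inner ℝ (LinearMap.toContinuousLinearMap (toEuclideanLin A) x) x =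
      x.ofLp ⬝ᵥ A *ᵥ x.ofLp := by
  simp [EuclideanSpace.inner_eq_star_dotProduct]

theorem dotProduct_diagonal_mulVec_self (w v : n → ℝ) :
    v ⬝ᵥ diagonal w *ᵥ v = ∑ i, w i * (v i * v i) := by
  simp only [dotProduct, mulVec_diagonal]
  exact Finset.sum_congr rfl fun i _ => by ring

theorem IsSymm.add_add_two_mul_abs_le {B : Matrix n n ℝ} (hB : B.IsSymm) {c : ℝ}
    (hq : ∀ v, v ⬝ᵥ B *ᵥ v ≤ c * (v ⬝ᵥ v)) {i j : n} (hij : i ≠ j) :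
    B i i + B j j + 2 * |B i j| ≤ 2 * c := by
  have key (s : ℝ) (hs : s * s = 1) : B i i + B j j + 2 * s * B i j ≤ 2 * c := by
    have := hq (Pi.single i 1 + Pi.single j s)
    simp [mulVec_add, add_dotProduct, dotProduct_add, hij, hij.symm, hB.apply i j] at this
    linear_combination this + (c - B j j) * hs
  rcases abs_cases (B i j) with ⟨h, -⟩ | ⟨h, -⟩
  · simpa [h] using key 1 (by norm_num)
  · simpa [h] using key (-1) (by norm_num)

theorem dotProduct_mulVec_le_of_diagonal_add {w : n → ℝ} {M : Matrix n n ℝ} {c β : ℝ}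
    (hq : ∀ v, v ⬝ᵥ (diagonal w + M) *ᵥ v ≤ c * (v ⬝ᵥ v)) (hw : ∀ i, β ≤ w i) (v : n → ℝ) :
    v ⬝ᵥ M *ᵥ v ≤ (c - β) * (v ⬝ᵥ v) := by
  have hdiag : β * (v ⬝ᵥ v) ≤ v ⬝ᵥ diagonal w *ᵥ v := by
    rw [dotProduct_diagonal_mulVec_self, dotProduct, Finset.mul_sum]
    exact Finset.sum_le_sum fun i _ => mul_le_mul_of_nonneg_right (hw i) (mul_self_nonneg _)
  have := hq v
  rw [add_mulVec, dotProduct_add] at this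
  linarith

omit [DecidableEq n] in
theorem neg_mul_le_dotProduct_mulVec {A : Matrix n n ℝ} {η : ℝ} (hη : 0 ≤ η)
    (hdiag : ∀ i, 0 ≤ A i i) (hoff : ∀ i j, i ≠ j → |A i j| ≤ η) (v : n → ℝ) :
    -((Fintype.card n - 1) * η * (v ⬝ᵥ v)) ≤ v ⬝ᵥ A *ᵥ v := by
  classical
  have hterm (i j : n) :
      η * ((if i = j then |v i| * |v i| else 0) - |v i| * |v j|) ≤ v i * (A i j * v j) := by
    split_ifs with h
    · subst h
      nlinarith [hdiag i, mul_self_nonneg (v i), abs_mul_abs_self (v i)]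
    · have : |v i * (A i j * v j)| ≤ η * (|v i| * |v j|) := by
        rw [abs_mul, abs_mul]
        nlinarith [hoff i j h, abs_nonneg (v i), abs_nonneg (v j), abs_nonneg (A i j),
          mul_nonneg (abs_nonneg (v i)) (abs_nonneg (v j))]
      linarith [neg_abs_le (v i * (A i j * v j))]
  have hsum : η * (∑ i, |v i| * |v i| - (∑ i, |v i|) ^ 2) ≤ v ⬝ᵥ A *ᵥ v := by
    calc η * (∑ i, |v i| * |v i| - (∑ i, |v i|) ^ 2)
        = ∑ i, ∑ j, η * ((if i = j then |v i| * |v i| else 0) - |v i| * |v j|) := by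
          rw [sq, Finset.sum_mul_sum]
          simp [mul_sub, Finset.mul_sum, Finset.sum_sub_distrib]
      _ ≤ ∑ i, ∑ j, v i * (A i j * v j) :=
          Finset.sum_le_sum fun i _ => Finset.sum_le_sum fun j _ => hterm i j
      _ = v ⬝ᵥ A *ᵥ v := by simp [dotProduct, mulVec, Finset.mul_sum]
  have hcs : (∑ i, |v i|) ^ 2 ≤ Fintype.card n * ∑ i, |v i| * |v i| := by
    simpa [sq] using sq_sum_le_card_mul_sum_sq (s := Finset.univ) (f := fun i => |v i|)
  have hvv : ∑ i, |v i| * |v i| = v ⬝ᵥ v := by simp [dotProduct]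
  rw [hvv] at hsum hcs
  nlinarith

theorem abs_dotProduct_mulVec_le_of_diagonal_add {w : n → ℝ} {M : Matrix n n ℝ} {c β : ℝ}
    (hsymm : (diagonal w + M).IsSymm) (hq : ∀ v, v ⬝ᵥ (diagonal w + M) *ᵥ v ≤ c * (v ⬝ᵥ v))
    (hw : ∀ i, β ≤ w i) (hM : ∀ i, 0 ≤ M i i) (hcβ : 0 ≤ c - β) (hn : 2 ≤ Fintype.card n)
    (v : n → ℝ) : |v ⬝ᵥ M *ᵥ v| ≤ (Fintype.card n - 1) * (c - β) * (v ⬝ᵥ v) := by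
  have hoff (i j : n) (hij : i ≠ j) : |M i j| ≤ c - β := by
    have := hsymm.add_add_two_mul_abs_le hq hij
    simp only [Matrix.add_apply, diagonal_apply_eq, diagonal_apply_ne _ hij, zero_add] at this
    linarith [hw i, hw j, hM i, hM j]
  have hn' : (1 : ℝ) ≤ Fintype.card n - 1 := by
    have : (2 : ℝ) ≤ Fintype.card n := by exact_mod_cast hn
    linarith
  have hvv : 0 ≤ v ⬝ᵥ v := by simpa using dotProduct_star_self_nonneg v
  refine abs_le.2 ⟨?_, ?_⟩
  · simpa [neg_mul, mul_assoc] using neg_mul_le_dotProduct_mulVec hcβ hM hoff v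
  · calc v ⬝ᵥ M *ᵥ v ≤ (c - β) * (v ⬝ᵥ v) := dotProduct_mulVec_le_of_diagonal_add hq hw v
      _ ≤ (Fintype.card n - 1) * (c - β) * (v ⬝ᵥ v) := by
        nlinarith [mul_le_mul_of_nonneg_right hn' (mul_nonneg hcβ hvv)]

theorem transpose_mul_self_diagonal_add (d : n → ℝ) (T : Matrix n n ℝ) :
    (diagonal d + T)ᵀ * (diagonal d + T) =
      diagonal (fun i => d i ^ 2) + (Tᵀ * diagonal d + diagonal d * T + Tᵀ * T) := by
  simp only [transpose_add, diagonal_transpose, add_mul, mul_add, diagonal_mul_diagonal, sq]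
  abel

theorem apply_self_nonneg_of_diag_eq_zero (d : n → ℝ) {T : Matrix n n ℝ}
    (hT : ∀ i, T i i = 0) (i : n) : 0 ≤ (Tᵀ * diagonal d + diagonal d * T + Tᵀ * T) i i := by
  rw [Matrix.add_apply, Matrix.add_apply, mul_diagonal, diagonal_mul, transpose_apply, hT,
    zero_mul, mul_zero, zero_add, zero_add, mul_apply]
  exact Finset.sum_nonneg fun k _ => mul_self_nonneg _

end Matrix

section specNorm

variable {k : ℕ}

theorem dotProduct_mulVec_le_specNorm (A : Matrix (Fin k) (Fin k) ℝ) (v : Fin k → ℝ) :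
    v ⬝ᵥ A *ᵥ v ≤ specNorm A * (v ⬝ᵥ v) := by
  have h := (real_inner_le_norm _ (WithLp.toLp 2 v)).trans (mul_le_mul_of_nonneg_right
    ((LinearMap.toContinuousLinearMap (toEuclideanLin A)).le_opNorm (WithLp.toLp 2 v))
    (norm_nonneg _))
  rwa [inner_toEuclideanLin_self, mul_assoc, ← sq,
    EuclideanSpace.real_norm_sq_eq_dotProduct] at h

theorem specNorm_le_of_abs_dotProduct_mulVec_le {A : Matrix (Fin k) (Fin k) ℝ} (hA : A.IsSymm)
    {C : ℝ} (hC : 0 ≤ C) (h : ∀ v, |v ⬝ᵥ A *ᵥ v| ≤ C * (v ⬝ᵥ v)) : specNorm A ≤ C := by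
  refine ContinuousLinearMap.norm_le_of_abs_inner_self_le _
    (isSymmetric_toEuclideanLin_iff.2 (isHermitian_iff_isSymm.2 hA)) hC fun x => ?_
  rw [inner_toEuclideanLin_self, EuclideanSpace.real_norm_sq_eq_dotProduct]
  exact h x.ofLp

end specNorm

theorem stmt7_general {r : ℕ} (hr : 2 ≤ r)
    (d : Fin r → ℝ) (T : Matrix (Fin r) (Fin r) ℝ)
    (δ : ℝ) (hδ : 0 < δ) (hd : ∀ i, δ ≤ d i)
    (hT : ∀ i j : Fin r, j ≤ i → T i j = 0)
    (ε : ℝ) (hδε : 0 ≤ 1 - δ ^ 2 + ε)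
    (hnorm : specNorm ((Matrix.diagonal d + T)ᵀ * (Matrix.diagonal d + T)) ≤ 1 + ε) :
    specNorm (Tᵀ * Matrix.diagonal d + Matrix.diagonal d * T + Tᵀ * T) ≤
      ((r : ℝ) - 1) * (1 - δ ^ 2 + ε) := by
  have hB := transpose_mul_self_diagonal_add d T
  set M := Tᵀ * diagonal d + diagonal d * T + Tᵀ * T
  have hMdiag : ∀ i, 0 ≤ M i i := apply_self_nonneg_of_diag_eq_zero d fun i => hT i i le_rfl
  have hsq : ∀ i, δ ^ 2 ≤ d i ^ 2 := fun i => pow_le_pow_left₀ hδ.le (hd i) 2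
  have hBsymm : (diagonal (fun i => d i ^ 2) + M).IsSymm := hB ▸ isSymm_transpose_mul_self _
  have hMsymm : M.IsSymm := by
    have h := hBsymm.sub (isSymm_diagonal fun i => d i ^ 2)
    rwa [add_sub_cancel_left] at h
  have hquad (v : Fin r → ℝ) :
      v ⬝ᵥ (diagonal (fun i => d i ^ 2) + M) *ᵥ v ≤ (1 + ε) * (v ⬝ᵥ v) :=
    hB ▸ (dotProduct_mulVec_le_specNorm _ v).trans
      (mul_le_mul_of_nonneg_right hnorm (by simpa using dotProduct_star_self_nonneg v))
  have hcard : 2 ≤ Fintype.card (Fin r) := by simpa using hr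
  have hη : 0 ≤ 1 + ε - δ ^ 2 := by linarith
  have hr' : (2 : ℝ) ≤ r := by exact_mod_cast hr
  refine specNorm_le_of_abs_dotProduct_mulVec_le hMsymm (by nlinarith) fun v => ?_
  simpa [add_sub_right_comm] using
    abs_dotProduct_mulVec_le_of_diagonal_add hBsymm hquad hsq hMdiag hη hcard v

theorem stmt7 {r : ℕ} (hr : 2 ≤ r)
    (d : Fin r → ℝ) (T : Matrix (Fin r) (Fin r) ℝ)
    (δ : ℝ) (hδ : 0 < δ) (hd : ∀ i, δ ≤ d i)
    (hT : ∀ i j : Fin r, j ≤ i → T i j = 0)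
    (ε : ℝ) (hε : 0 ≤ ε) (hδε : 0 ≤ 1 - δ ^ 2 + ε)
    (hnorm : specNorm ((Matrix.diagonal d + T)ᵀ * (Matrix.diagonal d + T)) ≤ 1 + ε) :
    specNorm (Tᵀ * Matrix.diagonal d + Matrix.diagonal d * T + Tᵀ * T) ≤
      ((r : ℝ) - 1) * (1 - δ ^ 2 + ε) :=
  stmt7_general hr d T δ hδ hd hT ε hδε hnorm
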